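/- Let (p_n) be a sequence of positive integers, and for each n let Σ_n and Σ̃_n be real symmetric p_n×p_n matrices such that sup_n ‖Σ_n‖ < ∞, sup_n ‖Σ̃_n‖ < ∞ and ‖Σ_n − Σ̃_n‖ → 0 as n → ∞. Assume that the empirical spectral distributions μ_{Σ̃_n} converge weakly to a probability measure ν^∞ on ℝ whose cumulative distribution function F_{ν^∞} is β-Hölder continuous for some β ∈ (0,1] (i.e. there is H > 0 with |F_{ν^∞}(s) − F_{ν^∞}(t)| ≤ H·|s−t|^β for all s, t ∈ ℝ). Then μ_{Σ_n} converges weakly to ν^∞, and there exist C > 0 and N ∈ ℕ such that for all n ≥ N: D(μ_{Σ_n}, ν^∞) ≤ C·(‖Σ_n − Σ̃_n‖^{β/(4+2β)} + D(μ_{Σ̃_n}, ν^∞)). -/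

import Mathlib

open MeasureTheory ProbabilityTheory Filter
open scoped NNReal

/-- Spectral (operator) norm of a real matrix. -/
noncomputable def specNorm {m p : Type*} [Fintype m] [Fintype p] [DecidableEq p]
    (M : Matrix m p ℝ) : ℝ :=
  ‖(Matrix.toEuclideanLin M).toContinuousLinearMap‖

/-- Empirical spectral distribution `μ_M = (1/p)·∑_{i} δ_{λ_i}` of a Hermitian
real matrix, as a measure on `ℝ`. -/
noncomputable def esd {p : ℕ} (M : Matrix (Fin p) (Fin p) ℝ) (hM : M.IsHermitian) :
    Measure ℝ :=
  ((p : ℝ≥0))⁻¹ • ∑ i, Measure.dirac (hM.eigenvalues i)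

/-- Cumulative distribution function of a measure on `ℝ`. -/
noncomputable def cdf' (μ : Measure ℝ) (t : ℝ) : ℝ := (μ (Set.Iic t)).toReal

/-- Kolmogorov distance between two measures on `ℝ`. -/
noncomputable def kolDist (μ ν : Measure ℝ) : ℝ := ⨆ t : ℝ, |cdf' μ t - cdf' ν t|

/-!
Weyl's inequality `|λ↓ₖ(Σₙ) - λ↓ₖ(Σ̃ₙ)| ≤ ‖Σₙ - Σ̃ₙ‖ =: εₙ` pairs the eigenvalues of the two
matrices (sorted decreasingly) up to `εₙ`. Hence the cdf of `μ_{Σₙ}` is squeezed between the cdf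
of `μ_{Σ̃ₙ}` shifted by `±εₙ`, and the Hölder continuity of `F_ν` turns the shift into an error
`H εₙ ^ β ≤ H εₙ ^ (β / (4 + 2β))` once `εₙ ≤ 1`. For weak convergence, all eigenvalues lie in
`[-K, K]`, where a bounded continuous `f` is uniformly continuous, so the two integrals of `f`
differ by at most the modulus of continuity of `f` at scale `εₙ`.
-/

open scoped BoundedContinuousFunction
open Finset

section Weyl

open Module Submodule

variable {E : Type*} [NormedAddCommGroup E] [InnerProductSpace ℝ E]

theorem inner_apply_self_le_of_mem_span_eigenvectors {ι : Type*} {T : E →ₗ[ℝ] E} {e : ι → E}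
    (he : Orthonormal ℝ e) {s : Finset ι} {l : ι → ℝ} (hTe : ∀ i ∈ s, T (e i) = l i • e i)
    {a : ℝ} (ha : ∀ i ∈ s, l i ≤ a) {v : E} (hv : v ∈ span ℝ (e '' s)) :
    inner ℝ (T v) v ≤ a * ‖v‖ ^ 2 := by
  obtain ⟨c, rfl⟩ := (mem_span_image_finset_iff_exists_fun' ℝ).mp hv
  have hT : T (∑ i ∈ s, c i • e i) = ∑ i ∈ s, (l i * c i) • e i := by
    simp only [map_sum, map_smul]
    exact sum_congr rfl fun i hi => by rw [hTe i hi, smul_smul, mul_comm]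
  rw [hT, ← real_inner_self_eq_norm_sq, he.inner_sum, he.inner_sum, mul_sum]
  refine sum_le_sum fun i hi => ?_
  simp only [conj_trivial]
  nlinarith [ha i hi, mul_self_nonneg (c i)]

variable [FiniteDimensional ℝ E]

/-- Min-max principle: the span of the `T`-eigenvectors indexed by `I` and that of the
`S`-eigenvectors indexed by `J` meet in some `v ≠ 0`, and then
`b ‖v‖² ≤ ⟪S v, v⟫ ≤ ⟪T v, v⟫ + ‖S - T‖ ‖v‖² ≤ (a + ‖S - T‖) ‖v‖²`. -/
theorem le_add_norm_sub_of_finrank_lt_card_add_card {ι : Type*} {T S : E →L[ℝ] E}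
    {e f : ι → E} (he : Orthonormal ℝ e) (hf : Orthonormal ℝ f) {I J : Finset ι}
    {l m : ι → ℝ} (hTe : ∀ i ∈ I, T (e i) = l i • e i) (hSf : ∀ j ∈ J, S (f j) = m j • f j)
    {a b : ℝ} (ha : ∀ i ∈ I, l i ≤ a) (hb : ∀ j ∈ J, b ≤ m j)
    (hcard : finrank ℝ E < I.card + J.card) : b ≤ a + ‖S - T‖ := by
  have hdim : ∀ {g : ι → E}, Orthonormal ℝ g → ∀ K : Finset ι,
      finrank ℝ (span ℝ (g '' K)) = K.card := fun hg K => by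
    rw [Set.image_eq_range]
    exact (finrank_span_eq_card (hg.linearIndependent.comp _ Subtype.val_injective)).trans
      (Fintype.card_coe K)
  have hmeet : 0 < finrank ℝ ↥(span ℝ (e '' I) ⊓ span ℝ (f '' J)) := by
    have := finrank_sup_add_finrank_inf_eq (span ℝ (e '' I)) (span ℝ (f '' J))
    have := (span ℝ (e '' I) ⊔ span ℝ (f '' J)).finrank_le
    rw [hdim he, hdim hf] at *
    omega
  obtain ⟨⟨v, hvU, hvV⟩, hv0⟩ := finrank_pos_iff_exists_ne_zero.mp hmeet
  have hv : 0 < ‖v‖ ^ 2 := by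
    have : v ≠ 0 := fun h => hv0 (Subtype.ext h)
    positivity
  have hTv := inner_apply_self_le_of_mem_span_eigenvectors he hTe ha hvU
  have hSv := inner_apply_self_le_of_mem_span_eigenvectors (T := -S.toLinearMap) hf
    (l := -m) (fun j hj => by simp [hSf j hj]) (fun j hj => neg_le_neg (hb j hj)) hvV
  have hST : inner ℝ ((S - T) v) v ≤ ‖S - T‖ * ‖v‖ ^ 2 :=
    (real_inner_le_norm _ _).trans (by nlinarith [(S - T).le_opNorm v, norm_nonneg v])
  simp only [LinearMap.neg_apply, inner_neg_left, ContinuousLinearMap.coe_coe,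
    sub_apply, inner_sub_left] at hTv hSv hST
  nlinarith

namespace LinearMap.IsSymmetric

variable {T S : E →L[ℝ] E} {n : ℕ} (hn : finrank ℝ E = n)

theorem abs_eigenvalues_le_norm (hT : (T : E →ₗ[ℝ] E).IsSymmetric) (k : Fin n) :
    |hT.eigenvalues hn k| ≤ ‖T‖ := by
  have h := T.le_opNorm (hT.eigenvectorBasis hn k)
  rw [← ContinuousLinearMap.coe_coe, hT.apply_eigenvectorBasis hn k] at h
  simpa [norm_smul] using h

theorem eigenvalues_le_eigenvalues_add_norm_sub (hT : (T : E →ₗ[ℝ] E).IsSymmetric)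
    (hS : (S : E →ₗ[ℝ] E).IsSymmetric) (k : Fin n) :
    hS.eigenvalues hn k ≤ hT.eigenvalues hn k + ‖S - T‖ := by
  refine le_add_norm_sub_of_finrank_lt_card_add_card (hT.eigenvectorBasis hn).orthonormal
    (hS.eigenvectorBasis hn).orthonormal (I := Ici k) (J := Iic k)
    (fun i _ => hT.apply_eigenvectorBasis hn i) (fun j _ => hS.apply_eigenvectorBasis hn j)
    (fun i hi => hT.eigenvalues_antitone hn (mem_Ici.mp hi))
    (fun j hj => hS.eigenvalues_antitone hn (mem_Iic.mp hj)) ?_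
  rw [Fin.card_Ici, Fin.card_Iic, hn]
  omega

theorem abs_eigenvalues_sub_le_norm_sub (hT : (T : E →ₗ[ℝ] E).IsSymmetric)
    (hS : (S : E →ₗ[ℝ] E).IsSymmetric) (k : Fin n) :
    |hT.eigenvalues hn k - hS.eigenvalues hn k| ≤ ‖T - S‖ := by
  rw [abs_sub_le_iff]
  constructor <;> linarith [norm_sub_rev S T, eigenvalues_le_eigenvalues_add_norm_sub hn hS hT k,
    eigenvalues_le_eigenvalues_add_norm_sub hn hT hS k]

end LinearMap.IsSymmetric

end Weyl

section EmpiricalMeasure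

variable {ι : Type*} [Fintype ι]

noncomputable def empiricalMeasure (x : ι → ℝ) : Measure ℝ :=
  (Fintype.card ι : ℝ≥0)⁻¹ • ∑ i, Measure.dirac (x i)

theorem cdf'_empiricalMeasure (x : ι → ℝ) (t : ℝ) :
    cdf' (empiricalMeasure x) t = #{i | x i ≤ t} / Fintype.card ι := by
  rw [cdf', empiricalMeasure, Measure.smul_apply, Measure.finsetSum_apply, ENNReal.smul_def]
  simp [Measure.dirac_apply' _ measurableSet_Iic, Set.indicator, sum_boole,
    div_eq_inv_mul]

instance [Nonempty ι] (x : ι → ℝ) : IsProbabilityMeasure (empiricalMeasure x) := by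
  constructor
  rw [empiricalMeasure, Measure.smul_apply, Measure.finsetSum_apply, ENNReal.smul_def]
  simp [ENNReal.inv_mul_cancel]

theorem integral_empiricalMeasure (x : ι → ℝ) (f : ℝ →ᵇ ℝ) :
    ∫ t, f t ∂(empiricalMeasure x) = (Fintype.card ι : ℝ)⁻¹ * ∑ i, f (x i) := by
  rw [empiricalMeasure, ENNReal.smul_def, integral_smul_measure,
    integral_finsetSum_measure fun i _ => f.integrable _]
  simp

theorem cdf'_empiricalMeasure_le_add {x y : ι → ℝ} {ε : ℝ} (h : ∀ i, y i ≤ x i + ε) (t : ℝ) :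
    cdf' (empiricalMeasure x) t ≤ cdf' (empiricalMeasure y) (t + ε) := by
  rw [cdf'_empiricalMeasure, cdf'_empiricalMeasure]
  refine div_le_div_of_nonneg_right ?_ (Nat.cast_nonneg _)
  exact_mod_cast card_le_card fun i => by
    simp only [mem_filter_univ]
    intro hi
    linarith [h i]

theorem abs_integral_empiricalMeasure_sub_le {x y : ι → ℝ} (f : ℝ →ᵇ ℝ) {δ : ℝ} (hδ : 0 ≤ δ)
    (h : ∀ i, |f (x i) - f (y i)| ≤ δ) :
    |∫ t, f t ∂(empiricalMeasure x) - ∫ t, f t ∂(empiricalMeasure y)| ≤ δ := by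
  rw [integral_empiricalMeasure, integral_empiricalMeasure, ← mul_sub, ← sum_sub_distrib,
    abs_mul, abs_inv, Nat.abs_cast]
  calc (Fintype.card ι : ℝ)⁻¹ * |∑ i, (f (x i) - f (y i))|
      ≤ (Fintype.card ι : ℝ)⁻¹ * (Fintype.card ι * δ) := by
        gcongr
        exact (abs_sum_le_sum_abs _ _).trans ((sum_le_sum fun i _ => h i).trans
          (by simp))
    _ ≤ δ := by
        rcases (Fintype.card ι).eq_zero_or_pos with h0 | h0
        · simp [h0, hδ]
        · rw [inv_mul_cancel_left₀ (by positivity)]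

theorem tendsto_integral_empiricalMeasure_sub {ι : ℕ → Type*} [∀ n, Fintype (ι n)]
    {x y : ∀ n, ι n → ℝ} {K : ℝ} (hx : ∀ n i, |x n i| ≤ K) (hy : ∀ n i, |y n i| ≤ K)
    {ε : ℕ → ℝ} (hε : Tendsto ε atTop (nhds 0)) (hxy : ∀ n i, |x n i - y n i| ≤ ε n)
    (f : ℝ →ᵇ ℝ) :
    Tendsto (fun n => ∫ t, f t ∂(empiricalMeasure (x n)) - ∫ t, f t ∂(empiricalMeasure (y n)))
      atTop (nhds 0) := by
  rw [Metric.tendsto_atTop]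
  intro δ hδ
  obtain ⟨η, hη, hf⟩ := Metric.uniformContinuousOn_iff.mp
    (isCompact_Icc.uniformContinuousOn_of_continuous (s := Set.Icc (-K) K)
      f.continuous.continuousOn) (δ / 2) (half_pos hδ)
  obtain ⟨N, hN⟩ := eventually_atTop.mp (hε.eventually_lt_const hη)
  refine ⟨N, fun n hn => ?_⟩
  rw [Real.dist_eq, sub_zero]
  refine (abs_integral_empiricalMeasure_sub_le f (half_pos hδ).le fun i => ?_).trans_lt
    (half_lt_self hδ)
  exact (hf _ (abs_le.mp (hx n i)) _ (abs_le.mp (hy n i))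
    ((hxy n i).trans_lt (hN n hn))).le

end EmpiricalMeasure

section Kolmogorov

theorem cdf'_nonneg (μ : Measure ℝ) (t : ℝ) : 0 ≤ cdf' μ t := ENNReal.toReal_nonneg

theorem cdf'_le_one (μ : Measure ℝ) [IsProbabilityMeasure μ] (t : ℝ) : cdf' μ t ≤ 1 :=
  ENNReal.toReal_le_of_le_ofReal zero_le_one (by simpa using prob_le_one)

theorem kolDist_nonneg (μ ν : Measure ℝ) : 0 ≤ kolDist μ ν :=
  Real.iSup_nonneg fun _ => abs_nonneg _

theorem abs_cdf'_sub_le_kolDist (μ ν : Measure ℝ) [IsProbabilityMeasure μ]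
    [IsProbabilityMeasure ν] (t : ℝ) : |cdf' μ t - cdf' ν t| ≤ kolDist μ ν := by
  refine le_ciSup (f := fun s => |cdf' μ s - cdf' ν s|) ⟨1, ?_⟩ t
  rintro _ ⟨s, rfl⟩
  have := cdf'_nonneg μ s; have := cdf'_le_one μ s
  have := cdf'_nonneg ν s; have := cdf'_le_one ν s
  exact abs_sub_le_iff.mpr ⟨by linarith, by linarith⟩

theorem kolDist_le_add_of_cdf'_le {μ μ' ν : Measure ℝ} [IsProbabilityMeasure μ']
    [IsProbabilityMeasure ν] {ε H β : ℝ} (hε : 0 ≤ ε)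
    (hup : ∀ t, cdf' μ t ≤ cdf' μ' (t + ε)) (hlow : ∀ t, cdf' μ' (t - ε) ≤ cdf' μ t)
    (hHol : ∀ s t, |cdf' ν s - cdf' ν t| ≤ H * |s - t| ^ β) :
    kolDist μ ν ≤ H * ε ^ β + kolDist μ' ν := by
  refine ciSup_le fun t => abs_le.mpr ⟨?_, ?_⟩
  · have hν := abs_le.mp (hHol (t - ε) t)
    have hμ' := abs_le.mp (abs_cdf'_sub_le_kolDist μ' ν (t - ε))
    rw [sub_sub_cancel_left, abs_neg, abs_of_nonneg hε] at hν
    linarith [hlow t]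
  · have hν := abs_le.mp (hHol (t + ε) t)
    have hμ' := abs_le.mp (abs_cdf'_sub_le_kolDist μ' ν (t + ε))
    rw [add_sub_cancel_left, abs_of_nonneg hε] at hν
    linarith [hup t]

end Kolmogorov

theorem specNorm_nonneg {m n : Type*} [Fintype m] [Fintype n] [DecidableEq n]
    (M : Matrix m n ℝ) : 0 ≤ specNorm M :=
  norm_nonneg _

namespace Matrix.IsHermitian

variable {n : Type*} [Fintype n] [DecidableEq n] {A B : Matrix n n ℝ}

theorem abs_eigenvalues₀_sub_le_specNorm (hA : A.IsHermitian) (hB : B.IsHermitian)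
    (k : Fin (Fintype.card n)) : |hA.eigenvalues₀ k - hB.eigenvalues₀ k| ≤ specNorm (A - B) := by
  have h := LinearMap.IsSymmetric.abs_eigenvalues_sub_le_norm_sub
    (T := (toEuclideanLin A).toContinuousLinearMap) (S := (toEuclideanLin B).toContinuousLinearMap)
    finrank_euclideanSpace (isSymmetric_toEuclideanLin_iff.mpr hA)
    (isSymmetric_toEuclideanLin_iff.mpr hB) k
  rwa [← map_sub, ← map_sub] at h

theorem abs_eigenvalues₀_le_specNorm (hA : A.IsHermitian) (k : Fin (Fintype.card n)) :
    |hA.eigenvalues₀ k| ≤ specNorm A :=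
  LinearMap.IsSymmetric.abs_eigenvalues_le_norm (T := (toEuclideanLin A).toContinuousLinearMap)
    finrank_euclideanSpace (isSymmetric_toEuclideanLin_iff.mpr hA) k

end Matrix.IsHermitian

/-- `hM.eigenvalues` is `hM.eigenvalues₀` (sorted decreasingly) reindexed by an arbitrary
equivalence, so the sorted version is the one Weyl's inequality applies to. -/
theorem esd_eq_empiricalMeasure {q : ℕ} (M : Matrix (Fin q) (Fin q) ℝ) (hM : M.IsHermitian) :
    esd M hM = empiricalMeasure hM.eigenvalues₀ := by
  rw [esd, empiricalMeasure]
  congr 1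
  · simp
  · exact Fintype.sum_equiv (Fintype.equivOfCardEq (Fintype.card_fin _)).symm _ _ fun _ => rfl

theorem tendsto_integral_esd_sub {p : ℕ → ℕ} {A B : ∀ n, Matrix (Fin (p n)) (Fin (p n)) ℝ}
    (hA : ∀ n, (A n).IsHermitian) (hB : ∀ n, (B n).IsHermitian) {K : ℝ}
    (hAK : ∀ n, specNorm (A n) ≤ K) (hBK : ∀ n, specNorm (B n) ≤ K)
    (hAB : Tendsto (fun n => specNorm (A n - B n)) atTop (nhds 0)) (f : ℝ →ᵇ ℝ) :
    Tendsto (fun n => ∫ t, f t ∂(esd (A n) (hA n)) - ∫ t, f t ∂(esd (B n) (hB n)))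
      atTop (nhds 0) := by
  simp only [esd_eq_empiricalMeasure]
  exact tendsto_integral_empiricalMeasure_sub
    (fun n k => ((hA n).abs_eigenvalues₀_le_specNorm k).trans (hAK n))
    (fun n k => ((hB n).abs_eigenvalues₀_le_specNorm k).trans (hBK n)) hAB
    (fun n k => (hA n).abs_eigenvalues₀_sub_le_specNorm (hB n) k) f

theorem kolDist_esd_le {q : ℕ} (hq : 0 < q) {A B : Matrix (Fin q) (Fin q) ℝ}
    (hA : A.IsHermitian) (hB : B.IsHermitian) {ν : Measure ℝ} [IsProbabilityMeasure ν]
    {H β : ℝ} (hHol : ∀ s t, |cdf' ν s - cdf' ν t| ≤ H * |s - t| ^ β) :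
    kolDist (esd A hA) ν ≤ H * specNorm (A - B) ^ β + kolDist (esd B hB) ν := by
  have : Nonempty (Fin (Fintype.card (Fin q))) := ⟨⟨0, by simpa using hq⟩⟩
  have hAB k := abs_le.mp (hA.abs_eigenvalues₀_sub_le_specNorm hB k)
  rw [esd_eq_empiricalMeasure, esd_eq_empiricalMeasure]
  refine kolDist_le_add_of_cdf'_le (specNorm_nonneg _)
    (cdf'_empiricalMeasure_le_add fun k => by linarith [hAB k]) (fun t => ?_) hHol
  have h := cdf'_empiricalMeasure_le_add (x := hB.eigenvalues₀) (y := hA.eigenvalues₀)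
    (fun k => by linarith [hAB k]) (t - specNorm (A - B))
  rwa [sub_add_cancel] at h

theorem stmt_16_general (p : ℕ → ℕ) (hp : ∀ n, 0 < p n)
    (Sig1 Sig2 : (n : ℕ) → Matrix (Fin (p n)) (Fin (p n)) ℝ)
    (hSig1 : ∀ n, (Sig1 n).IsHermitian) (hSig2 : ∀ n, (Sig2 n).IsHermitian)
    (hb1 : ∃ K : ℝ, ∀ n, specNorm (Sig1 n) ≤ K) (hb2 : ∃ K : ℝ, ∀ n, specNorm (Sig2 n) ≤ K)
    (hdiff : Tendsto (fun n => specNorm (Sig1 n - Sig2 n)) atTop (nhds 0))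
    (ν : Measure ℝ) [IsProbabilityMeasure ν]
    (hweak : ∀ f : BoundedContinuousFunction ℝ ℝ,
      Tendsto (fun n => ∫ x, f x ∂(esd (Sig2 n) (hSig2 n))) atTop (nhds (∫ x, f x ∂ν)))
    (β : ℝ) (hβ : 0 < β)
    (Hconst : ℝ)
    (hHol : ∀ s t : ℝ, |cdf' ν s - cdf' ν t| ≤ Hconst * |s - t| ^ β) :
    (∀ f : BoundedContinuousFunction ℝ ℝ,
      Tendsto (fun n => ∫ x, f x ∂(esd (Sig1 n) (hSig1 n))) atTop (nhds (∫ x, f x ∂ν))) ∧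
    ∃ C > (0:ℝ), ∃ N : ℕ, ∀ n ≥ N,
      kolDist (esd (Sig1 n) (hSig1 n)) ν ≤
        C * (specNorm (Sig1 n - Sig2 n) ^ (β / (4 + 2 * β)) +
          kolDist (esd (Sig2 n) (hSig2 n)) ν) := by
  refine ⟨fun f => ?_, ?_⟩
  · obtain ⟨K₁, hK₁⟩ := hb1
    obtain ⟨K₂, hK₂⟩ := hb2
    simpa using (tendsto_integral_esd_sub hSig1 hSig2 (fun n => (hK₁ n).trans (le_max_left _ K₂))
      (fun n => (hK₂ n).trans (le_max_right K₁ _)) hdiff f).add (hweak f)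
  · refine ⟨max Hconst 1, by positivity, ?_⟩
    obtain ⟨N, hN⟩ := eventually_atTop.mp (hdiff.eventually_le_const zero_lt_one)
    refine ⟨N, fun n hn => (kolDist_esd_le (hp n) (hSig1 n) (hSig2 n) hHol).trans ?_⟩
    have hε := specNorm_nonneg (Sig1 n - Sig2 n)
    have hpow : specNorm (Sig1 n - Sig2 n) ^ β ≤ specNorm (Sig1 n - Sig2 n) ^ (β / (4 + 2 * β)) :=
      Real.rpow_le_rpow_of_exponent_ge' hε (hN n hn) (by positivity)
        (div_le_self hβ.le (by linarith))
    rw [mul_add]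
    exact add_le_add (mul_le_mul (le_max_left _ _) hpow (by positivity) (by positivity))
      (le_mul_of_one_le_left (kolDist_nonneg _ _) (le_max_right _ _))

theorem stmt_16 (p : ℕ → ℕ) (hp : ∀ n, 0 < p n)
    (Sig1 Sig2 : (n : ℕ) → Matrix (Fin (p n)) (Fin (p n)) ℝ)
    (hSig1 : ∀ n, (Sig1 n).IsHermitian) (hSig2 : ∀ n, (Sig2 n).IsHermitian)
    (hb1 : ∃ K : ℝ, ∀ n, specNorm (Sig1 n) ≤ K) (hb2 : ∃ K : ℝ, ∀ n, specNorm (Sig2 n) ≤ K)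
    (hdiff : Tendsto (fun n => specNorm (Sig1 n - Sig2 n)) atTop (nhds 0))
    (ν : Measure ℝ) [IsProbabilityMeasure ν]
    (hweak : ∀ f : BoundedContinuousFunction ℝ ℝ,
      Tendsto (fun n => ∫ x, f x ∂(esd (Sig2 n) (hSig2 n))) atTop (nhds (∫ x, f x ∂ν)))
    (β : ℝ) (hβ : 0 < β) (hβ1 : β ≤ 1)
    (Hconst : ℝ) (hH : 0 < Hconst)
    (hHol : ∀ s t : ℝ, |cdf' ν s - cdf' ν t| ≤ Hconst * |s - t| ^ β) :
    (∀ f : BoundedContinuousFunction ℝ ℝ,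
      Tendsto (fun n => ∫ x, f x ∂(esd (Sig1 n) (hSig1 n))) atTop (nhds (∫ x, f x ∂ν))) ∧
    ∃ C > (0:ℝ), ∃ N : ℕ, ∀ n ≥ N,
      kolDist (esd (Sig1 n) (hSig1 n)) ν ≤
        C * (specNorm (Sig1 n - Sig2 n) ^ (β / (4 + 2 * β)) +
          kolDist (esd (Sig2 n) (hSig2 n)) ν) :=
  stmt_16_general p hp Sig1 Sig2 hSig1 hSig2 hb1 hb2 hdiff ν hweak β hβ Hconst hHol
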